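/- arXiv:1610.09931 — 2 statements merged into one kernel-verified Lean document; each statement's English description precedes it below -/
import Mathlib

section
/- On R^4, define P with nonzero entries P^{12} = p12, P^{34} = p34 and P' with nonzero entries P'^{12} = a21 x1 + a22 x2, P'^{34} = a73 x3 + a74 x4 (real constants). Then P, P' are compatible Poisson structures, and for p12 p34 ≠ 0 the functions H1 = (a21 x1 + a22 x2)/p12 + (a73 x3 + a74 x4)/p34 and H2 = (1/2)(((a21 x1 + a22 x2)/p12)^2 + ((a73 x3 + a74 x4)/p34)^2) are in bi-involution: {H1,H2} = {H1,H2}' = 0. -/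
open scoped BigOperators

noncomputable def pd {m : ℕ} (μ : Fin m) (f : (Fin m → ℝ) → ℝ) (x : Fin m → ℝ) : ℝ :=
  fderiv ℝ f x (Pi.single μ 1)

/-- Poisson bracket associated to a bivector field `P`. -/
noncomputable def pbrk {m : ℕ} (P : (Fin m → ℝ) → Fin m → Fin m → ℝ)
    (f g : (Fin m → ℝ) → ℝ) (x : Fin m → ℝ) : ℝ :=
  ∑ μ, ∑ ν, P x μ ν * pd μ f x * pd ν g x

/-- Schouten bracket `[P,P]^{λμν}`. -/
noncomputable def schouten {m : ℕ} (P : (Fin m → ℝ) → Fin m → Fin m → ℝ)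
    (l μ ν : Fin m) (x : Fin m → ℝ) : ℝ :=
  ∑ ρ, (P x ρ l * pd ρ (fun y => P y μ ν) x
      + P x ρ ν * pd ρ (fun y => P y l μ) x
      + P x ρ μ * pd ρ (fun y => P y ν l) x)

/-- Mixed Schouten bracket `[P,Q]^{λμν}`. -/
noncomputable def schoutenMixed {m : ℕ} (P Q : (Fin m → ℝ) → Fin m → Fin m → ℝ)
    (l μ ν : Fin m) (x : Fin m → ℝ) : ℝ :=
  ∑ ρ, (P x ρ l * pd ρ (fun y => Q y μ ν) x + Q x ρ l * pd ρ (fun y => P y μ ν) x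
      + P x ρ ν * pd ρ (fun y => Q y l μ) x + Q x ρ ν * pd ρ (fun y => P y l μ) x
      + P x ρ μ * pd ρ (fun y => Q y ν l) x + Q x ρ μ * pd ρ (fun y => P y ν l) x)

/-- The Poisson bivector `P` on the group `VII_0 ⊕ R`. -/
noncomputable def PVII (p12 p34 : ℝ) : (Fin 4 → ℝ) → Fin 4 → Fin 4 → ℝ :=
  fun _ μ ν =>
    !![0, p12, 0, 0;
       -p12, 0, 0, 0;
       0, 0, 0, p34;
       0, 0, -p34, 0] μ ν

/-- The Poisson bivector `P'` on the group `VII_0 ⊕ R`. -/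
noncomputable def PVII' (a21 a22 a73 a74 : ℝ) : (Fin 4 → ℝ) → Fin 4 → Fin 4 → ℝ :=
  fun x μ ν =>
    let A := a21 * x 0 + a22 * x 1
    let B := a73 * x 2 + a74 * x 3
    !![0, A, 0, 0;
       -A, 0, 0, 0;
       0, 0, 0, B;
       0, 0, -B, 0] μ ν

/-!
`P` is constant, so its Schouten bracket vanishes. `P'` is linear, so each partial derivative of an
entry of `P'` is that entry evaluated at a basis vector, and `[P', P']`, `[P, P']` reduce to
polynomial identities checked entry by entry.

Both bivectors are block diagonal for `ℝ⁴ = ℝ² ⊕ ℝ²`, and `u = (a21 x₁ + a22 x₂) / p12`,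
`v = (a73 x₃ + a74 x₄) / p34` depend on different blocks, so `{u, v} = {u, v}' = 0`. As
`H1 = u + v` and `H2 = (u² + v²) / 2`, the Leibniz rule and antisymmetry give
`{H1, H2} = (v - u) {u, v} = 0` for either bracket.
-/

section PartialDerivative

variable {m : ℕ} {f g : (Fin m → ℝ) → ℝ} {x : Fin m → ℝ}

theorem pd_const (c : ℝ) (ρ : Fin m) : pd ρ (fun _ => c) x = 0 := by
  simp [pd]

theorem pd_of_isLinearMap (hf : IsLinearMap ℝ f) (ρ : Fin m) : pd ρ f x = f (Pi.single ρ 1) := by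
  let L : (Fin m → ℝ) →L[ℝ] ℝ := LinearMap.toContinuousLinearMap (IsLinearMap.mk' f hf)
  simp only [pd, show f = L from rfl, L.fderiv]

theorem pd_add (hf : DifferentiableAt ℝ f x) (hg : DifferentiableAt ℝ g x) (ρ : Fin m) :
    pd ρ (fun y => f y + g y) x = pd ρ f x + pd ρ g x := by
  simp [pd, fderiv_fun_add hf hg]

theorem pd_half_sq_add_sq (hf : DifferentiableAt ℝ f x) (hg : DifferentiableAt ℝ g x) (ρ : Fin m) :
    pd ρ (fun y => 1 / 2 * (f y ^ 2 + g y ^ 2)) x = f x * pd ρ f x + g x * pd ρ g x := by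
  rw [pd, ((hf.hasFDerivAt.pow 2).fun_add (hg.hasFDerivAt.pow 2) |>.const_mul (1 / 2)).fderiv]
  simp only [Nat.add_one_sub_one, pow_one, nsmul_eq_mul, Nat.cast_ofNat, smul_add,
    add_apply, smul_apply, smul_eq_mul, pd]
  ring

end PartialDerivative

section PoissonBracket

variable {m : ℕ} {P : (Fin m → ℝ) → Fin m → Fin m → ℝ} {x : Fin m → ℝ}

theorem pbrk_swap (hP : ∀ μ ν, P x ν μ = -P x μ ν) (f g : (Fin m → ℝ) → ℝ) :
    pbrk P g f x = -pbrk P f g x := by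
  rw [pbrk, Finset.sum_comm, pbrk, ← Finset.sum_neg_distrib]
  refine Finset.sum_congr rfl fun μ _ => ?_
  rw [← Finset.sum_neg_distrib]
  refine Finset.sum_congr rfl fun ν _ => ?_
  rw [hP]; ring

theorem pbrk_self (hP : ∀ μ ν, P x ν μ = -P x μ ν) (f : (Fin m → ℝ) → ℝ) : pbrk P f f x = 0 := by
  linarith [pbrk_swap hP f f]

theorem pbrk_add_half_sq_add_sq_eq_zero (hP : ∀ μ ν, P x ν μ = -P x μ ν)
    {u v : (Fin m → ℝ) → ℝ} (hu : DifferentiableAt ℝ u x) (hv : DifferentiableAt ℝ v x)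
    (huv : pbrk P u v x = 0) :
    pbrk P (fun y => u y + v y) (fun y => 1 / 2 * (u y ^ 2 + v y ^ 2)) x = 0 := by
  have expand : pbrk P (fun y => u y + v y) (fun y => 1 / 2 * (u y ^ 2 + v y ^ 2)) x
      = u x * pbrk P u u x + v x * pbrk P u v x + u x * pbrk P v u x + v x * pbrk P v v x := by
    simp only [pbrk, pd_add hu hv, pd_half_sq_add_sq hu hv, Finset.mul_sum, ← Finset.sum_add_distrib]
    exact Finset.sum_congr rfl fun μ _ => Finset.sum_congr rfl fun ν _ => by ring
  rw [expand, pbrk_swap hP u v, huv, pbrk_self hP, pbrk_self hP]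
  ring

end PoissonBracket

theorem schouten_const {m : ℕ} (M : Fin m → Fin m → ℝ) (l μ ν : Fin m) (x : Fin m → ℝ) :
    schouten (fun _ => M) l μ ν x = 0 := by
  simp [schouten, pd_const]

theorem isLinearMap_PVII'_apply (a21 a22 a73 a74 : ℝ) (μ ν : Fin 4) :
    IsLinearMap ℝ (fun y => PVII' a21 a22 a73 a74 y μ ν) := by
  constructor <;> intros <;> fin_cases μ <;> fin_cases ν <;> simp [PVII'] <;> ring

theorem isLinearMap_two_coords_div {m : ℕ} (a b p : ℝ) (i j : Fin m) :
    IsLinearMap ℝ (fun y : Fin m → ℝ => (a * y i + b * y j) / p) := by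
  constructor <;> intros <;> simp <;> ring

theorem PVII_skew (p12 p34 : ℝ) (x : Fin 4 → ℝ) (μ ν : Fin 4) :
    PVII p12 p34 x ν μ = -PVII p12 p34 x μ ν := by
  fin_cases μ <;> fin_cases ν <;> simp [PVII]

theorem PVII'_skew (a21 a22 a73 a74 : ℝ) (x : Fin 4 → ℝ) (μ ν : Fin 4) :
    PVII' a21 a22 a73 a74 x ν μ = -PVII' a21 a22 a73 a74 x μ ν := by
  fin_cases μ <;> fin_cases ν <;> simp [PVII']

theorem PVII_eq_zero_of_lt_of_le (p12 p34 : ℝ) (x : Fin 4 → ℝ) {i j : Fin 4} (hi : i < 2)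
    (hj : 2 ≤ j) : PVII p12 p34 x i j = 0 := by
  fin_cases i <;> fin_cases j <;> simp_all [PVII]

theorem PVII'_eq_zero_of_lt_of_le (a21 a22 a73 a74 : ℝ) (x : Fin 4 → ℝ) {i j : Fin 4} (hi : i < 2)
    (hj : 2 ≤ j) : PVII' a21 a22 a73 a74 x i j = 0 := by
  fin_cases i <;> fin_cases j <;> simp_all [PVII']

theorem pbrk_two_coords_div_eq_zero {P : (Fin 4 → ℝ) → Fin 4 → Fin 4 → ℝ} {x : Fin 4 → ℝ}
    (hP : ∀ i j : Fin 4, i < 2 → 2 ≤ j → P x i j = 0) (a b c d p q : ℝ) :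
    pbrk P (fun y => (a * y 0 + b * y 1) / p) (fun y => (c * y 2 + d * y 3) / q) x = 0 := by
  simp [pbrk, pd_of_isLinearMap (isLinearMap_two_coords_div _ _ _ _ _), Fin.sum_univ_four,
    hP 0 2, hP 0 3, hP 1 2, hP 1 3]

theorem schouten_PVII'_eq_zero (a21 a22 a73 a74 : ℝ) (l μ ν : Fin 4) (x : Fin 4 → ℝ) :
    schouten (PVII' a21 a22 a73 a74) l μ ν x = 0 := by
  simp only [schouten, pd_of_isLinearMap (isLinearMap_PVII'_apply a21 a22 a73 a74 _ _)]
  fin_cases l <;> fin_cases μ <;> fin_cases ν <;> simp [Fin.sum_univ_four, PVII']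

theorem schoutenMixed_PVII_PVII'_eq_zero (p12 p34 a21 a22 a73 a74 : ℝ) (l μ ν : Fin 4)
    (x : Fin 4 → ℝ) : schoutenMixed (PVII p12 p34) (PVII' a21 a22 a73 a74) l μ ν x = 0 := by
  simp only [schoutenMixed, pd_of_isLinearMap (isLinearMap_PVII'_apply a21 a22 a73 a74 _ _),
    PVII, pd_const]
  fin_cases l <;> fin_cases μ <;> fin_cases ν <;> simp [Fin.sum_univ_four, PVII']

theorem VII0R_compatible_and_involution (p12 p34 a21 a22 a73 a74 : ℝ) :
    ((∀ x l μ ν, schouten (PVII p12 p34) l μ ν x = 0) ∧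
     (∀ x l μ ν, schouten (PVII' a21 a22 a73 a74) l μ ν x = 0) ∧
     (∀ x l μ ν, schoutenMixed (PVII p12 p34) (PVII' a21 a22 a73 a74) l μ ν x = 0)) ∧
    (p12 * p34 ≠ 0 →
      let H1 : (Fin 4 → ℝ) → ℝ := fun x =>
        (a21 * x 0 + a22 * x 1) / p12 + (a73 * x 2 + a74 * x 3) / p34
      let H2 : (Fin 4 → ℝ) → ℝ := fun x =>
        (1 / 2) * (((a21 * x 0 + a22 * x 1) / p12) ^ 2
          + ((a73 * x 2 + a74 * x 3) / p34) ^ 2)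
      (∀ x, pbrk (PVII p12 p34) H1 H2 x = 0) ∧
      (∀ x, pbrk (PVII' a21 a22 a73 a74) H1 H2 x = 0)) := by
  refine ⟨⟨fun x l μ ν => schouten_const _ l μ ν x,
    fun x l μ ν => schouten_PVII'_eq_zero _ _ _ _ l μ ν x,
    fun x l μ ν => schoutenMixed_PVII_PVII'_eq_zero _ _ _ _ _ _ l μ ν x⟩, fun _ => ?_⟩
  have hu (x : Fin 4 → ℝ) : DifferentiableAt ℝ (fun y => (a21 * y 0 + a22 * y 1) / p12) x := by
    fun_prop
  have hv (x : Fin 4 → ℝ) : DifferentiableAt ℝ (fun y => (a73 * y 2 + a74 * y 3) / p34) x := by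
    fun_prop
  exact ⟨fun x => pbrk_add_half_sq_add_sq_eq_zero (PVII_skew p12 p34 x) (hu x) (hv x)
      (pbrk_two_coords_div_eq_zero (fun _ _ => PVII_eq_zero_of_lt_of_le p12 p34 x) _ _ _ _ _ _),
    fun x => pbrk_add_half_sq_add_sq_eq_zero (PVII'_skew a21 a22 a73 a74 x) (hu x) (hv x)
      (pbrk_two_coords_div_eq_zero (fun _ _ => PVII'_eq_zero_of_lt_of_le a21 a22 a73 a74 x)
        _ _ _ _ _ _)⟩
end

section
/- On R^6 with the Poisson brackets of A_{6,1} (P, P' as given: P^{14}=p14, P^{23}=p23, P^{34}=p34+p14 x2, P^{36}=p36, P^{46}=-p14 x5, P^{56}=p56; P'^{14}=c44 p14 x4/p34, P'^{23}=b32 x2, P'^{34}=c44 x4 + c44 p14 x2 x4/p34, P'^{46}=-c44 p14 x4 x5/p34, P'^{56}=e65 x5), assume p14 p23 p34 p56 ≠ 0. Then the three functions H1 = b32 x2/p23 + c44 x4/p34 + e65 x5/p56, H2 = (1/2)((b32 x2/p23)^2 + (c44 x4/p34)^2 + (e65 x5/p56)^2), H3 = (1/3)((b32 x2/p23)^3 +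 (c44 x4/p34)^3 + (e65 x5/p56)^3) are pairwise in involution with respect to both brackets: {Hi,Hj} = {Hi,Hj}' = 0 for all i,j. -/
open scoped BigOperators

/-- The Poisson bivector `P` on the nilpotent group `A_{6,1}`. -/
noncomputable def P61 (p14 p23 p34 p36 p56 : ℝ) : (Fin 6 → ℝ) → Fin 6 → Fin 6 → ℝ :=
  fun x μ ν =>
    let C := p34 + p14 * x 1
    let D := -(p14 * x 4)
    !![0, 0, 0, p14, 0, 0;
       0, 0, p23, 0, 0, 0;
       0, -p23, 0, C, 0, p36;
       -p14, 0, -C, 0, 0, D;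
       0, 0, 0, 0, 0, p56;
       0, 0, -p36, -D, -p56, 0] μ ν

/-- The Poisson bivector `P'` on the nilpotent group `A_{6,1}`. -/
noncomputable def P61' (p14 p34 b32 c44 e65 : ℝ) : (Fin 6 → ℝ) → Fin 6 → Fin 6 → ℝ :=
  fun x μ ν =>
    let A := c44 * p14 * x 3 / p34
    let B := b32 * x 1
    let C := c44 * x 3 + c44 * p14 * x 1 * x 3 / p34
    let D := -(c44 * p14 * x 3 * x 4 / p34)
    let E := e65 * x 4
    !![0, 0, 0, A, 0, 0;
       0, 0, B, 0, 0, 0;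
       0, -B, 0, C, 0, 0;
       -A, 0, -C, 0, 0, D;
       0, 0, 0, 0, 0, E;
       0, 0, 0, -D, -E, 0] μ ν

/- Each `H i` is a function of `x 1`, `x 3`, `x 4` alone, and both bivectors vanish on every
pair of these coordinates, so every term of either bracket has a vanishing factor. -/

section Bracket

variable {m : ℕ}

/-- Where `f` is not differentiable, `pd` is `0` by the junk value of `fderiv`; otherwise it is
the derivative of `f` along a line on which `f` is constant. -/
theorem pd_eq_zero_of_dependsOn {f : (Fin m → ℝ) → ℝ} {s : Set (Fin m)} {μ : Fin m}
    (hf : DependsOn f s) (hμ : μ ∉ s) (x : Fin m → ℝ) : pd μ f x = 0 := by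
  by_cases hd : DifferentiableAt ℝ f x
  · have hline : (fun t : ℝ => f (x + t • Pi.single μ 1)) = fun _ => f x := by
      funext t
      refine hf fun i hi => ?_
      have hiμ : i ≠ μ := fun h => hμ (h ▸ hi)
      simp [hiμ]
    have hderiv := hd.hasFDerivAt.hasLineDerivAt (Pi.single μ 1)
    rw [HasLineDerivAt, hline] at hderiv
    exact hderiv.unique (hasDerivAt_const 0 (f x))
  · simp [pd, fderiv_zero_of_not_differentiableAt hd]

theorem pbrk_eq_zero_of_dependsOn {P : (Fin m → ℝ) → Fin m → Fin m → ℝ}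
    {f g : (Fin m → ℝ) → ℝ} {s : Set (Fin m)} (hf : DependsOn f s) (hg : DependsOn g s)
    {x : Fin m → ℝ} (hP : ∀ μ ∈ s, ∀ ν ∈ s, P x μ ν = 0) : pbrk P f g x = 0 := by
  refine Finset.sum_eq_zero fun μ _ => Finset.sum_eq_zero fun ν _ => ?_
  by_cases hμ : μ ∈ s
  · by_cases hν : ν ∈ s
    · simp [hP μ hμ ν hν]
    · simp [pd_eq_zero_of_dependsOn hg hν]
  · simp [pd_eq_zero_of_dependsOn hf hμ]

end Bracket

theorem P61_eq_zero {p14 p23 p34 p36 p56 : ℝ} {x : Fin 6 → ℝ} :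
    ∀ μ ∈ ({1, 3, 4} : Set (Fin 6)), ∀ ν ∈ ({1, 3, 4} : Set (Fin 6)),
      P61 p14 p23 p34 p36 p56 x μ ν = 0 := by
  simp only [Set.mem_insert_iff, Set.mem_singleton_iff]
  rintro μ (rfl | rfl | rfl) ν (rfl | rfl | rfl) <;> simp [P61]

theorem P61'_eq_zero {p14 p34 b32 c44 e65 : ℝ} {x : Fin 6 → ℝ} :
    ∀ μ ∈ ({1, 3, 4} : Set (Fin 6)), ∀ ν ∈ ({1, 3, 4} : Set (Fin 6)),
      P61' p14 p34 b32 c44 e65 x μ ν = 0 := by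
  simp only [Set.mem_insert_iff, Set.mem_singleton_iff]
  rintro μ (rfl | rfl | rfl) ν (rfl | rfl | rfl) <;> simp [P61']

theorem A61_bi_involution_general (p14 p23 p34 p36 p56 b32 c44 e65 : ℝ) :
    let u : (Fin 6 → ℝ) → ℝ := fun x => b32 * x 1 / p23
    let v : (Fin 6 → ℝ) → ℝ := fun x => c44 * x 3 / p34
    let w : (Fin 6 → ℝ) → ℝ := fun x => e65 * x 4 / p56
    let H : Fin 3 → (Fin 6 → ℝ) → ℝ :=
      ![fun x => u x + v x + w x,
        fun x => (1 / 2) * ((u x) ^ 2 + (v x) ^ 2 + (w x) ^ 2),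
        fun x => (1 / 3) * ((u x) ^ 3 + (v x) ^ 3 + (w x) ^ 3)]
    ∀ i j : Fin 3, ∀ x,
      pbrk (P61 p14 p23 p34 p36 p56) (H i) (H j) x = 0 ∧
      pbrk (P61' p14 p34 b32 c44 e65) (H i) (H j) x = 0 := by
  intro u v w H i j x
  have hH : ∀ k, DependsOn (H k) {1, 3, 4} := by
    intro k y z hyz
    have h1 := hyz 1 (by simp)
    have h3 := hyz 3 (by simp)
    have h4 := hyz 4 (by simp)
    fin_cases k <;> simp [H, u, v, w, h1, h3, h4]
  exact ⟨pbrk_eq_zero_of_dependsOn (hH i) (hH j) P61_eq_zero,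
    pbrk_eq_zero_of_dependsOn (hH i) (hH j) P61'_eq_zero⟩

theorem A61_bi_involution (p14 p23 p34 p36 p56 b32 c44 e65 : ℝ)
    (hne : p14 * p23 * p34 * p56 ≠ 0) :
    let u : (Fin 6 → ℝ) → ℝ := fun x => b32 * x 1 / p23
    let v : (Fin 6 → ℝ) → ℝ := fun x => c44 * x 3 / p34
    let w : (Fin 6 → ℝ) → ℝ := fun x => e65 * x 4 / p56
    let H : Fin 3 → (Fin 6 → ℝ) → ℝ :=
      ![fun x => u x + v x + w x,
        fun x => (1 / 2) * ((u x) ^ 2 + (v x) ^ 2 + (w x) ^ 2),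
        fun x => (1 / 3) * ((u x) ^ 3 + (v x) ^ 3 + (w x) ^ 3)]
    ∀ i j : Fin 3, ∀ x,
      pbrk (P61 p14 p23 p34 p36 p56) (H i) (H j) x = 0 ∧
      pbrk (P61' p14 p34 b32 c44 e65) (H i) (H j) x = 0 :=
  A61_bi_involution_general p14 p23 p34 p36 p56 b32 c44 e65
end
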